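/- arXiv:1103.2574 — 2 statements merged into one kernel-verified Lean document; each statement's English description precedes it below -/
import Mathlib

section
/- (Aubrun–Nechita) Every multiplicative system of norms is equal to the q-norm for some q ∈ [1,∞]; that is, if (‖·‖_n)_{n≥1} is a multiplicative system of norms, then there exists q ∈ [1,∞] such that ‖x‖_n equals the ℓ^q-norm of x for every n ≥ 1 and every x ∈ ℝ^n. -/
open scoped NNReal ENNReal BigOperators

/-- The `ℓ^q`-norm on `ℝⁿ`, for `q ∈ [1,∞]`. -/
noncomputable def lqNorm (q : ℝ≥0∞) {n : ℕ} (x : Fin n → ℝ) : ℝ :=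
  if q = ∞ then ((Finset.univ.sup fun i => ‖x i‖₊ : ℝ≥0) : ℝ)
  else (∑ i, |x i| ^ q.toReal) ^ (1 / q.toReal)

/-- A system of norms: a norm `N n` on `ℝⁿ` for each `n`, compatible with injections
`f : Fin m → Fin n` (where `fx` is `x` on the image of `f` and `0` elsewhere). -/
structure NormSystem where
  N : ∀ n : ℕ, (Fin n → ℝ) → ℝ
  add_le : ∀ {n : ℕ} (x y : Fin n → ℝ), N n (x + y) ≤ N n x + N n y
  smul_eq : ∀ {n : ℕ} (c : ℝ) (x : Fin n → ℝ), N n (c • x) = |c| * N n x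
  eq_zero : ∀ {n : ℕ} (x : Fin n → ℝ), N n x = 0 → x = 0
  inj_eq : ∀ {m n : ℕ} (f : Fin m → Fin n), Function.Injective f →
    ∀ x : Fin m → ℝ,
      N n (fun j => ∑ i ∈ Finset.univ.filter (fun i => f i = j), x i) = N m x

/-- Multiplicativity of a system of norms, with respect to the fixed bijection
`finProdFinEquiv : Fin m × Fin n ≃ Fin (m * n)`. -/
def NormSystem.IsMultiplicative (S : NormSystem) : Prop :=
  ∀ {m n : ℕ} (x : Fin m → ℝ) (y : Fin n → ℝ),
    S.N (m * n) (fun k => x (finProdFinEquiv.symm k).1 * y (finProdFinEquiv.symm k).2)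
      = S.N m x * S.N n y

/-!
A multiplicative system of norms is invariant under permutations and, via tensoring with
`(1, -1)`, under sign changes of single coordinates; by convexity it is therefore monotone in the
absolute values of the entries. Hence `f n = ‖(1, …, 1)‖_n` is monotone and multiplicative, so
`f n = n ^ c` with `c = log₂ f 2 ∈ [0, 1]`, which is also the `ℓ^q`-norm of `(1, …, 1)` for
`q = 1 / c`.

Grouping the entries of `y` by absolute value, both norms lie between the largest block
`v * f (#{i | |y i| = v})` and the sum of all blocks, so they agree up to a factor equal to the
number of distinct nonzero values `|y i|`. For `y = x^{⊗K}` this factor is at most `(K + 1) ^ n`,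
while both norms are raised to the `K`-th power; taking `K`-th roots and letting `K → ∞`
removes it.
-/

open Finset Function

lemma le_of_pow_le_mul_pow {a b C : ℝ} (N : ℕ) (hb : 0 ≤ b)
    (h : ∀ k : ℕ, 0 < k → a ^ k ≤ C * (k : ℝ) ^ N * b ^ k) : a ≤ b := by
  by_contra! hba
  rcases hb.eq_or_lt with rfl | hb0
  · have := h 1 one_pos
    simp only [pow_one, mul_zero] at this
    linarith
  · set r := a / b
    have hr : 1 < r := (one_lt_div hb0).2 hba
    have hlim := (tendsto_pow_const_div_const_pow_of_one_lt N hr).const_mul C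
    rw [mul_zero] at hlim
    obtain ⟨k, hsmall, hk⟩ :=
      ((hlim.eventually (gt_mem_nhds one_pos)).and (Filter.eventually_gt_atTop 0)).exists
    have hrk : r ^ k ≤ C * (k : ℝ) ^ N := by
      rw [div_pow, div_le_iff₀ (by positivity)]
      exact h k hk
    rw [← mul_div_assoc, div_lt_one (by positivity)] at hsmall
    linarith

theorem eq_rpow_logb_of_monotone_of_map_mul {f : ℕ → ℝ} (hf : Monotone f)
    (hmul : ∀ m n, f (m * n) = f m * f n) (h2 : 0 < f 2) {n : ℕ} (hn : 1 ≤ n) :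
    f n = (n : ℝ) ^ Real.logb 2 (f 2) := by
  set c := Real.logb 2 (f 2)
  have h1 : f 1 = 1 := (mul_eq_left₀ h2.ne').1 (by simpa using (hmul 2 1).symm)
  have hpow : ∀ m k, f (m ^ k) = f m ^ k := by
    intro m k
    induction k with
    | zero => simpa using h1
    | succ k ih => rw [pow_succ, hmul, ih, pow_succ]
  have hc : 0 ≤ c := Real.logb_nonneg one_lt_two (h1 ▸ hf one_le_two)
  have hf2pow : ∀ j : ℕ, f (2 ^ j) = ((2 : ℝ) ^ j) ^ c := by
    intro j
    rw [hpow, ← Real.rpow_logb two_pos (by norm_num) h2, ← Real.rpow_natCast,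
      ← Real.rpow_natCast, ← Real.rpow_mul two_pos.le, ← Real.rpow_mul two_pos.le, mul_comm]
  have hfn : 0 ≤ f n := zero_le_one.trans (h1 ▸ hf hn)
  -- With `2 ^ l ≤ n ^ k < 2 ^ (l + 1)`, both `f n ^ k = f (n ^ k)` and `(n ^ c) ^ k` lie between
  -- `f (2 ^ l)` and `f (2 ^ (l + 1)) = 2 ^ c * f (2 ^ l)`.
  have hbracket : ∀ k : ℕ, ∃ l : ℕ, f (2 ^ l) ≤ f n ^ k ∧ f n ^ k ≤ 2 ^ c * f (2 ^ l) ∧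
      f (2 ^ l) ≤ ((n : ℝ) ^ c) ^ k ∧ ((n : ℝ) ^ c) ^ k ≤ 2 ^ c * f (2 ^ l) := by
    intro k
    set l := Nat.log 2 (n ^ k)
    have hlo : 2 ^ l ≤ n ^ k := Nat.pow_log_le_self 2 (by positivity)
    have hhi : n ^ k ≤ 2 ^ (l + 1) := (Nat.lt_pow_succ_log_self one_lt_two _).le
    have hsucc : f (2 ^ (l + 1)) = 2 ^ c * f (2 ^ l) := by
      rw [hf2pow, hf2pow, pow_succ, Real.mul_rpow (by positivity) (by positivity), mul_comm]
    have hcast : ((n : ℝ) ^ c) ^ k = ((n ^ k : ℕ) : ℝ) ^ c := by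
      rw [← Real.rpow_natCast, ← Real.rpow_mul (by positivity), mul_comm,
        Real.rpow_mul (by positivity), Real.rpow_natCast, Nat.cast_pow]
    refine ⟨l, ?_, ?_, ?_, ?_⟩
    · rw [← hpow]
      exact hf hlo
    · rw [← hpow, ← hsucc]
      exact hf hhi
    · rw [hcast, hf2pow]
      exact Real.rpow_le_rpow (by positivity) (by exact_mod_cast hlo) hc
    · rw [hcast, ← hsucc, hf2pow]
      exact Real.rpow_le_rpow (by positivity) (by exact_mod_cast hhi) hc
  apply le_antisymm
  · refine le_of_pow_le_mul_pow (C := 2 ^ c) 0 (by positivity) fun k _ => ?_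
    obtain ⟨l, -, h₁, h₂, -⟩ := hbracket k
    rw [pow_zero, mul_one]
    exact h₁.trans (mul_le_mul_of_nonneg_left h₂ (by positivity))
  · refine le_of_pow_le_mul_pow (C := 2 ^ c) 0 hfn fun k _ => ?_
    obtain ⟨l, h₁, -, -, h₂⟩ := hbracket k
    rw [pow_zero, mul_one]
    exact h₂.trans (mul_le_mul_of_nonneg_left h₁ (by positivity))

lemma le_rpow_sum_rpow {ι : Type*} {s : Finset ι} {a : ι → ℝ} (ha : ∀ i ∈ s, 0 ≤ a i)
    {p : ℝ} (hp : 0 < p) {j : ι} (hj : j ∈ s) : a j ≤ (∑ i ∈ s, a i ^ p) ^ (1 / p) := by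
  have hpow : ∀ i ∈ s, 0 ≤ a i ^ p := fun i hi => Real.rpow_nonneg (ha i hi) p
  calc a j = (a j ^ p) ^ (1 / p) := by rw [one_div, Real.rpow_rpow_inv (ha j hj) hp.ne']
    _ ≤ (∑ i ∈ s, a i ^ p) ^ (1 / p) :=
      Real.rpow_le_rpow (hpow j hj) (single_le_sum hpow hj) (by positivity)

lemma rpow_sum_rpow_le_sum {ι : Type*} (s : Finset ι) {a : ι → ℝ} (ha : ∀ i ∈ s, 0 ≤ a i)
    {p : ℝ} (hp : 1 ≤ p) : (∑ i ∈ s, a i ^ p) ^ (1 / p) ≤ ∑ i ∈ s, a i := by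
  set S := ∑ i ∈ s, a i
  have hS : 0 ≤ S := sum_nonneg ha
  have hsplit : ∀ t : ℝ, 0 ≤ t → t ^ p = t * t ^ (p - 1) := fun t ht => by
    rw [← Real.rpow_one_add' ht (by linarith), add_sub_cancel]
  have hsum : ∑ i ∈ s, a i ^ p ≤ S ^ p :=
    calc ∑ i ∈ s, a i ^ p = ∑ i ∈ s, a i * a i ^ (p - 1) :=
          sum_congr rfl fun i hi => hsplit _ (ha i hi)
      _ ≤ ∑ i ∈ s, a i * S ^ (p - 1) := sum_le_sum fun i hi =>
          mul_le_mul_of_nonneg_left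
            (Real.rpow_le_rpow (ha i hi) (single_le_sum ha hi) (by linarith)) (ha i hi)
      _ = S ^ p := by rw [← sum_mul, hsplit _ hS]
  calc (∑ i ∈ s, a i ^ p) ^ (1 / p) ≤ (S ^ p) ^ (1 / p) :=
        Real.rpow_le_rpow (sum_nonneg fun i hi => Real.rpow_nonneg (ha i hi) p) hsum
          (by positivity)
    _ = S := by rw [one_div, Real.rpow_rpow_inv hS (by linarith)]

def tensorVec {m n : ℕ} (x : Fin m → ℝ) (y : Fin n → ℝ) : Fin (m * n) → ℝ :=
  fun k => x (finProdFinEquiv.symm k).1 * y (finProdFinEquiv.symm k).2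

def tensorPowDim (n : ℕ) : ℕ → ℕ
  | 0 => n
  | k + 1 => tensorPowDim n k * n

/-- The `(k + 1)`-fold tensor power of `x`. -/
def tensorPow {n : ℕ} (x : Fin n → ℝ) : (k : ℕ) → Fin (tensorPowDim n k) → ℝ
  | 0 => x
  | k + 1 => tensorVec (tensorPow x k) x

def IsTensorMultiplicative (φ : ∀ m : ℕ, (Fin m → ℝ) → ℝ) : Prop :=
  ∀ {m n : ℕ} (x : Fin m → ℝ) (y : Fin n → ℝ), φ (m * n) (tensorVec x y) = φ m x * φ n y

lemma IsTensorMultiplicative.map_tensorPow {φ : ∀ m : ℕ, (Fin m → ℝ) → ℝ}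
    (hφ : IsTensorMultiplicative φ) {n : ℕ} (x : Fin n → ℝ) (k : ℕ) :
    φ (tensorPowDim n k) (tensorPow x k) = φ n x ^ (k + 1) := by
  induction k with
  | zero => simp [tensorPow, tensorPowDim]
  | succ k ih =>
    show φ (tensorPowDim n k * n) (tensorVec (tensorPow x k) x) = _
    rw [hφ, ih, ← pow_succ]

lemma exists_abs_tensorPow_eq_prod {n : ℕ} (x : Fin n → ℝ) (k : ℕ)
    (j : Fin (tensorPowDim n k)) :
    ∃ a ∈ Fintype.piFinset fun _ : Fin n => range (k + 2),
      |tensorPow x k j| = ∏ i, |x i| ^ a i := by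
  induction k with
  | zero =>
    change Fin n at j
    refine ⟨fun i => if j = i then 1 else 0, Fintype.mem_piFinset.2 fun i => ?_, ?_⟩
    · split_ifs <;> simp
    · simp [tensorPow]
  | succ k ih =>
    obtain ⟨a, ha, habs⟩ := ih (finProdFinEquiv.symm j).1
    refine ⟨fun i => a i + if (finProdFinEquiv.symm j).2 = i then 1 else 0,
      Fintype.mem_piFinset.2 fun i => ?_, ?_⟩
    · have := Fintype.mem_piFinset.1 ha i
      rw [mem_range] at this ⊢
      split_ifs <;> omega
    · simp only [pow_add, prod_mul_distrib, prod_pow_boole, mem_univ, if_true, ← habs]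
      exact abs_mul _ _

noncomputable def levels {m : ℕ} (y : Fin m → ℝ) : Finset ℝ :=
  (univ.image fun i => |y i|).erase 0

noncomputable def levelCount {m : ℕ} (y : Fin m → ℝ) (v : ℝ) : ℕ :=
  #{i | |y i| = v}

noncomputable def levelPart {m : ℕ} (y : Fin m → ℝ) (v : ℝ) : Fin m → ℝ :=
  fun i => if |y i| = v then y i else 0

lemma mem_levels {m : ℕ} {y : Fin m → ℝ} {v : ℝ} : v ∈ levels y ↔ v ≠ 0 ∧ ∃ i, |y i| = v := by
  simp [levels]

lemma pos_of_mem_levels {m : ℕ} {y : Fin m → ℝ} {v : ℝ} (hv : v ∈ levels y) : 0 < v := by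
  obtain ⟨hv0, i, rfl⟩ := mem_levels.1 hv
  exact (abs_nonneg _).lt_of_ne' hv0

lemma one_le_levelCount {m : ℕ} {y : Fin m → ℝ} {v : ℝ} (hv : v ∈ levels y) :
    1 ≤ levelCount y v := by
  obtain ⟨-, i, rfl⟩ := mem_levels.1 hv
  exact card_pos.2 ⟨i, by simp⟩

lemma sum_levelPart {m : ℕ} (y : Fin m → ℝ) : ∑ v ∈ levels y, levelPart y v = y := by
  ext i
  rw [Finset.sum_apply]
  simp only [levelPart, sum_ite_eq]
  split_ifs with hi
  · rfl
  · exact (abs_eq_zero.1 (by_contra fun h => hi (mem_levels.2 ⟨h, i, rfl⟩))).symm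

lemma sum_abs_rpow_eq_sum_levels {m : ℕ} (y : Fin m → ℝ) {p : ℝ} (hp : p ≠ 0) :
    ∑ i, |y i| ^ p = ∑ v ∈ levels y, (levelCount y v : ℝ) * v ^ p := by
  rw [levels, sum_erase _ (by simp [Real.zero_rpow hp])]
  exact (sum_comp (fun v : ℝ => v ^ p) _).trans (by simp [levelCount, nsmul_eq_mul])

lemma card_levels_tensorPow_le {n : ℕ} (x : Fin n → ℝ) (k : ℕ) :
    #(levels (tensorPow x k)) ≤ (k + 2) ^ n := by
  calc #(levels (tensorPow x k))
      ≤ #((Fintype.piFinset fun _ : Fin n => range (k + 2)).image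
          fun a => ∏ i, |x i| ^ a i) := by
        refine card_le_card fun v hv => ?_
        obtain ⟨j, -, rfl⟩ := mem_image.1 (mem_erase.1 hv).2
        obtain ⟨a, ha, habs⟩ := exists_abs_tensorPow_eq_prod x k j
        exact mem_image.2 ⟨a, ha, habs.symm⟩
    _ ≤ (k + 2) ^ n := card_image_le.trans (by simp)

/-- `f c` stands for the norm of `c` ones, so that `v * f (levelCount y v)` is the norm of the
block of entries of `y` of absolute value `v`. -/
def SandwichedByLevels (f : ℕ → ℝ) (φ : ∀ m : ℕ, (Fin m → ℝ) → ℝ) : Prop :=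
  ∀ (m : ℕ) (y : Fin m → ℝ), (∀ v ∈ levels y, v * f (levelCount y v) ≤ φ m y) ∧
    φ m y ≤ ∑ v ∈ levels y, v * f (levelCount y v)

lemma SandwichedByLevels.congr {f g : ℕ → ℝ} {φ : ∀ m : ℕ, (Fin m → ℝ) → ℝ}
    (hφ : SandwichedByLevels f φ) (hfg : ∀ c, 1 ≤ c → f c = g c) : SandwichedByLevels g φ := by
  intro m y
  have hfg' : ∀ v ∈ levels y, f (levelCount y v) = g (levelCount y v) :=
    fun v hv => hfg _ (one_le_levelCount hv)
  refine ⟨fun v hv => hfg' v hv ▸ (hφ m y).1 v hv,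
    (hφ m y).2.trans_eq (sum_congr rfl fun v hv => ?_)⟩
  rw [hfg' v hv]

/-- The tensor power trick: `x^{⊗K}` has only polynomially many levels in `K`, so the factor
`#(levels _)` lost in comparing `φ` with `ψ` disappears after taking `K`-th roots. -/
lemma le_of_sandwichedByLevels {f : ℕ → ℝ} {φ ψ : ∀ m : ℕ, (Fin m → ℝ) → ℝ}
    (hψ₀ : ∀ m y, 0 ≤ ψ m y) (hφ : IsTensorMultiplicative φ) (hψ : IsTensorMultiplicative ψ)
    (hφf : ∀ m (y : Fin m → ℝ), φ m y ≤ ∑ v ∈ levels y, v * f (levelCount y v))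
    (hψf : ∀ m (y : Fin m → ℝ), ∀ v ∈ levels y, v * f (levelCount y v) ≤ ψ m y)
    {n : ℕ} (x : Fin n → ℝ) : φ n x ≤ ψ n x := by
  refine le_of_pow_le_mul_pow (C := 2 ^ n) n (hψ₀ n x) fun K hK => ?_
  obtain ⟨k, rfl⟩ := Nat.exists_eq_add_one_of_ne_zero hK.ne'
  set y := tensorPow x k
  have hcard : (#(levels y) : ℝ) ≤ 2 ^ n * ((k + 1 : ℕ) : ℝ) ^ n := by
    rw [← mul_pow]
    calc (#(levels y) : ℝ) ≤ ((k + 2) ^ n : ℕ) := by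
          exact_mod_cast card_levels_tensorPow_le x k
      _ ≤ _ := by push_cast; gcongr; linarith
  calc φ n x ^ (k + 1) = φ _ y := (hφ.map_tensorPow x k).symm
    _ ≤ ∑ v ∈ levels y, v * f (levelCount y v) := hφf _ y
    _ ≤ #(levels y) • ψ _ y := sum_le_card_nsmul _ _ _ (hψf _ y)
    _ ≤ 2 ^ n * ((k + 1 : ℕ) : ℝ) ^ n * ψ _ y := by
      rw [nsmul_eq_mul]
      exact mul_le_mul_of_nonneg_right hcard (hψ₀ _ y)
    _ = 2 ^ n * ((k + 1 : ℕ) : ℝ) ^ n * ψ n x ^ (k + 1) := by rw [hψ.map_tensorPow]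

lemma eq_of_sandwichedByLevels {f : ℕ → ℝ} {φ ψ : ∀ m : ℕ, (Fin m → ℝ) → ℝ}
    (hφ₀ : ∀ m y, 0 ≤ φ m y) (hψ₀ : ∀ m y, 0 ≤ ψ m y)
    (hφ : IsTensorMultiplicative φ) (hψ : IsTensorMultiplicative ψ)
    (hφf : SandwichedByLevels f φ) (hψf : SandwichedByLevels f ψ) {n : ℕ} (x : Fin n → ℝ) :
    φ n x = ψ n x :=
  le_antisymm
    (le_of_sandwichedByLevels hψ₀ hφ hψ (fun m y => (hφf m y).2) (fun m y => (hψf m y).1) x)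
    (le_of_sandwichedByLevels hφ₀ hψ hφ (fun m y => (hψf m y).2) (fun m y => (hφf m y).1) x)

lemma lqNorm_nonneg (q : ℝ≥0∞) {n : ℕ} (x : Fin n → ℝ) : 0 ≤ lqNorm q x := by
  unfold lqNorm
  split_ifs <;> positivity

lemma lqNorm_of_ne_top {q : ℝ≥0∞} (hq : q ≠ ∞) {n : ℕ} (x : Fin n → ℝ) :
    lqNorm q x = (∑ i, |x i| ^ q.toReal) ^ (1 / q.toReal) :=
  if_neg hq

lemma lqNorm_top_le_iff {n : ℕ} {x : Fin n → ℝ} {r : ℝ} (hr : 0 ≤ r) :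
    lqNorm ∞ x ≤ r ↔ ∀ i, |x i| ≤ r := by
  lift r to ℝ≥0 using hr
  rw [lqNorm, if_pos rfl, NNReal.coe_le_coe, Finset.sup_le_iff]
  simp [← NNReal.coe_le_coe]

lemma abs_le_lqNorm_top {n : ℕ} (x : Fin n → ℝ) (i : Fin n) : |x i| ≤ lqNorm ∞ x :=
  (lqNorm_top_le_iff (lqNorm_nonneg ∞ x)).1 le_rfl i

lemma isTensorMultiplicative_lqNorm (q : ℝ≥0∞) : IsTensorMultiplicative fun _ => lqNorm q := by
  intro m n x y
  by_cases hq : q = ∞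
  · subst hq
    simp only [lqNorm, tensorVec, if_true, ← NNReal.coe_mul, NNReal.finset_sup_mul,
      NNReal.mul_finset_sup, nnnorm_mul]
    congr 1
    rw [← sup_product_right univ univ fun p : Fin m × Fin n => ‖x p.1‖₊ * ‖y p.2‖₊,
      univ_product_univ, ← map_univ_equiv finProdFinEquiv.symm, sup_map]
    rfl
  · simp only [lqNorm_of_ne_top hq]
    rw [← Real.mul_rpow (by positivity) (by positivity), sum_mul_sum,
      ← Fintype.sum_prod_type fun p : Fin m × Fin n => |x p.1| ^ q.toReal * |y p.2| ^ q.toReal,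
      ← Fintype.sum_equiv finProdFinEquiv.symm _ _ fun _ => rfl]
    simp only [tensorVec, abs_mul, Real.mul_rpow (abs_nonneg _) (abs_nonneg _)]

/-- For `q = ∞` the weight `c ^ (1 / q.toReal)` is `c ^ 0 = 1`, since `(∞ : ℝ≥0∞).toReal = 0`. -/
lemma sandwichedByLevels_lqNorm {q : ℝ≥0∞} (hq : 1 ≤ q) :
    SandwichedByLevels (fun c => (c : ℝ) ^ (1 / q.toReal)) fun _ => lqNorm q := by
  intro m y
  have hlevels : ∀ v ∈ levels y, 0 ≤ v := fun v hv => (pos_of_mem_levels hv).le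
  by_cases hqt : q = ∞
  · subst hqt
    simp only [ENNReal.toReal_top, div_zero, Real.rpow_zero, mul_one]
    refine ⟨fun v hv => ?_, (lqNorm_top_le_iff (sum_nonneg hlevels)).2 fun i => ?_⟩
    · obtain ⟨-, i, rfl⟩ := mem_levels.1 hv
      exact abs_le_lqNorm_top y i
    · rcases eq_or_ne (y i) 0 with h | h
      · simpa [h] using sum_nonneg hlevels
      · exact single_le_sum hlevels (mem_levels.2 ⟨abs_ne_zero.2 h, i, rfl⟩)
  · set p := q.toReal
    have hp : 1 ≤ p := by simpa using ENNReal.toReal_mono hqt hq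
    set a : ℝ → ℝ := fun v => v * (levelCount y v : ℝ) ^ (1 / p)
    have ha : ∀ v ∈ levels y, 0 ≤ a v := fun v hv => mul_nonneg (hlevels v hv) (by positivity)
    have hsum : ∑ i, |y i| ^ p = ∑ v ∈ levels y, a v ^ p := by
      rw [sum_abs_rpow_eq_sum_levels y (by linarith)]
      refine sum_congr rfl fun v hv => ?_
      rw [Real.mul_rpow (hlevels v hv) (by positivity), ← Real.rpow_mul (by positivity),
        one_div_mul_cancel (by linarith), Real.rpow_one, mul_comm]
    beta_reduce
    rw [lqNorm_of_ne_top hqt, hsum]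
    exact ⟨fun v hv => le_rpow_sum_rpow ha (by linarith) hv, rpow_sum_rpow_le_sum _ ha hp⟩

namespace NormSystem

variable (S : NormSystem)

def toSeminorm (n : ℕ) : Seminorm ℝ (Fin n → ℝ) :=
  Seminorm.of (S.N n) S.add_le fun c x => by rw [S.smul_eq, Real.norm_eq_abs]

def onesNorm (n : ℕ) : ℝ :=
  S.N n 1

lemma isMultiplicative_iff : S.IsMultiplicative ↔ IsTensorMultiplicative S.N :=
  Iff.rfl

lemma N_nonneg (n : ℕ) (x : Fin n → ℝ) : 0 ≤ S.N n x :=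
  apply_nonneg (S.toSeminorm n) x

lemma N_extend {m n : ℕ} {f : Fin m → Fin n} (hf : Injective f) (x : Fin m → ℝ) :
    S.N n (extend f x 0) = S.N m x := by
  convert S.inj_eq f hf x using 2
  ext j
  by_cases hj : ∃ i, f i = j
  · obtain ⟨i, rfl⟩ := hj
    rw [hf.extend_apply, sum_eq_single_of_mem i (by simp)
      fun i' hi' hne => absurd (hf (by simpa using hi')) hne]
  · rw [extend_apply' _ _ _ hj, sum_eq_zero fun i hi => absurd ⟨i, by simpa using hi⟩ hj]
    rfl

lemma N_comp_perm {n : ℕ} (σ : Equiv.Perm (Fin n)) (x : Fin n → ℝ) :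
    S.N n (x ∘ σ) = S.N n x := by
  rw [← S.N_extend σ.injective (x ∘ σ)]
  congr 1
  ext j
  obtain ⟨i, rfl⟩ := σ.surjective j
  exact σ.injective.extend_apply _ _ i

lemma N_indicator {m : ℕ} (A : Finset (Fin m)) :
    S.N m (fun j => if j ∈ A then 1 else 0) = S.onesNorm #A := by
  set e := A.orderEmbOfFin rfl
  have hrange : ∀ j, (∃ i, e i = j) ↔ j ∈ A := fun j => by
    rw [← Set.mem_range, range_orderEmbOfFin, mem_coe]
  rw [onesNorm, ← S.N_extend e.injective]
  congr 1
  ext j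
  split_ifs with hj
  · obtain ⟨i, rfl⟩ := (hrange j).2 hj
    exact (e.injective.extend_apply 1 0 i).symm
  · rw [extend_apply' _ _ _ (mt (hrange j).1 hj)]
    rfl

variable {S}

lemma N_update_neg (hmul : S.IsMultiplicative) {n : ℕ} (x : Fin n → ℝ) (i : Fin n) :
    S.N n (update x i (-x i)) = S.N n x := by
  set e : Fin 2 → ℝ := ![1, -1]
  have he : S.N 2 e ≠ 0 := fun h => by simpa [e] using congrFun (S.eq_zero e h) 0
  -- `x' ⊗ e` is `x ⊗ e` with the two entries indexed by `(i, 0)` and `(i, 1)` swapped.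
  have hswap : tensorVec (update x i (-x i)) e =
      tensorVec x e ∘ Equiv.swap (finProdFinEquiv (i, 0)) (finProdFinEquiv (i, 1)) := by
    ext k
    obtain ⟨⟨a, b⟩, rfl⟩ := finProdFinEquiv.surjective k
    by_cases ha : a = i
    · subst ha
      fin_cases b <;> simp [tensorVec, e]
    · rw [comp_apply, Equiv.swap_apply_of_ne_of_ne (by simp [ha]) (by simp [ha])]
      simp [tensorVec, update_of_ne ha]
  apply mul_right_cancel₀ he
  rw [← S.isMultiplicative_iff.1 hmul, ← S.isMultiplicative_iff.1 hmul, hswap, N_comp_perm]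

lemma N_update_mul_le (hmul : S.IsMultiplicative) {n : ℕ} (x : Fin n → ℝ) (i : Fin n) {t : ℝ}
    (ht : |t| ≤ 1) : S.N n (update x i (t * x i)) ≤ S.N n x := by
  obtain ⟨ht₁, ht₂⟩ := abs_le.1 ht
  have hconvex :
      update x i (t * x i) = ((1 + t) / 2) • x + ((1 - t) / 2) • update x i (-x i) := by
    ext j
    by_cases hj : j = i
    · subst hj
      simp only [update_self, Pi.add_apply, Pi.smul_apply, smul_eq_mul]
      ring
    · simp only [update_of_ne hj, Pi.add_apply, Pi.smul_apply, smul_eq_mul]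
      ring
  calc S.N n (update x i (t * x i))
      ≤ |(1 + t) / 2| * S.N n x + |(1 - t) / 2| * S.N n (update x i (-x i)) := by
        rw [hconvex, ← S.smul_eq, ← S.smul_eq]
        exact S.add_le _ _
    _ = S.N n x := by
        rw [N_update_neg hmul, abs_of_nonneg (by linarith), abs_of_nonneg (by linarith)]
        ring

lemma N_mul_le (hmul : S.IsMultiplicative) {n : ℕ} {t : Fin n → ℝ} (ht : ∀ i, |t i| ≤ 1)
    (x : Fin n → ℝ) : S.N n (t * x) ≤ S.N n x := by
  suffices ∀ s : Finset (Fin n), S.N n (fun i => (if i ∈ s then t i else 1) * x i) ≤ S.N n x by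
    exact (this univ).trans_eq' (by simp [Pi.mul_def])
  intro s
  induction s using Finset.induction_on with
  | empty => simp
  | insert a s ha ih =>
    refine le_of_eq_of_le (congrArg _ ?_) ((N_update_mul_le hmul _ a (ht a)).trans ih)
    ext j
    by_cases hj : j = a
    · subst hj
      simp [ha]
    · simp [hj]

lemma N_mono (hmul : S.IsMultiplicative) {n : ℕ} {x y : Fin n → ℝ} (h : ∀ i, |x i| ≤ |y i|) :
    S.N n x ≤ S.N n y := by
  have hx : x = (fun i => x i / y i) * y := by
    ext i
    by_cases hy : y i = 0
    · have := h i
      rw [hy, abs_zero, abs_nonpos_iff] at this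
      simp [this, hy]
    · simp [div_mul_cancel₀ _ hy]
  rw [hx]
  exact N_mul_le hmul (fun i => by rw [abs_div]; exact div_le_one_of_le₀ (h i) (abs_nonneg _)) y

lemma N_eq_of_abs_eq (hmul : S.IsMultiplicative) {n : ℕ} {x y : Fin n → ℝ}
    (h : ∀ i, |x i| = |y i|) : S.N n x = S.N n y :=
  le_antisymm (N_mono hmul fun i => (h i).le) (N_mono hmul fun i => (h i).ge)

lemma onesNorm_mul (hmul : S.IsMultiplicative) (m n : ℕ) :
    S.onesNorm (m * n) = S.onesNorm m * S.onesNorm n := by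
  have h := hmul (1 : Fin m → ℝ) (1 : Fin n → ℝ)
  simp only [Pi.one_apply, mul_one] at h
  exact h

lemma onesNorm_one (hmul : S.IsMultiplicative) : S.onesNorm 1 = 1 := by
  have hne : S.onesNorm 1 ≠ 0 := fun h => by simpa using congrFun (S.eq_zero 1 h) 0
  simpa [hne] using onesNorm_mul hmul 1 1

lemma onesNorm_monotone (hmul : S.IsMultiplicative) : Monotone S.onesNorm := by
  intro m n hmn
  have hcard : #(univ.map (Fin.castLEEmb hmn)) = m := by simp
  rw [← hcard, ← N_indicator]
  exact N_mono hmul fun i => by split_ifs <;> simp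

lemma onesNorm_two_le (hmul : S.IsMultiplicative) : S.onesNorm 2 ≤ 2 := by
  have hsplit : (1 : Fin 2 → ℝ) =
      (fun j => if j ∈ ({0} : Finset (Fin 2)) then 1 else 0) +
        fun j => if j ∈ ({1} : Finset (Fin 2)) then 1 else 0 := by
    ext j
    fin_cases j <;> simp
  have h := S.add_le (fun j => if j ∈ ({0} : Finset (Fin 2)) then 1 else 0)
    fun j => if j ∈ ({1} : Finset (Fin 2)) then 1 else 0
  rw [← hsplit, N_indicator, N_indicator, card_singleton, card_singleton, onesNorm_one hmul] at h
  rw [onesNorm]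
  linarith

lemma exists_onesNorm_eq_rpow (hmul : S.IsMultiplicative) :
    ∃ c : ℝ, 0 ≤ c ∧ c ≤ 1 ∧ ∀ n, 1 ≤ n → S.onesNorm n = (n : ℝ) ^ c := by
  have h2 : 1 ≤ S.onesNorm 2 := onesNorm_one hmul ▸ onesNorm_monotone hmul one_le_two
  refine ⟨Real.logb 2 (S.onesNorm 2), Real.logb_nonneg one_lt_two h2, ?_, fun n hn =>
    eq_rpow_logb_of_monotone_of_map_mul (onesNorm_monotone hmul) (onesNorm_mul hmul)
      (zero_lt_one.trans_le h2) hn⟩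
  calc Real.logb 2 (S.onesNorm 2) ≤ Real.logb 2 2 :=
        Real.logb_le_logb_of_le one_lt_two (zero_lt_one.trans_le h2) (onesNorm_two_le hmul)
    _ = 1 := Real.logb_self_eq_one one_lt_two

lemma N_levelPart (hmul : S.IsMultiplicative) {m : ℕ} (y : Fin m → ℝ) {v : ℝ} (hv : 0 ≤ v) :
    S.N m (levelPart y v) = v * S.onesNorm (levelCount y v) := by
  have hlevel : (fun i => if |y i| = v then v else 0) =
      v • fun i => if i ∈ ({i | |y i| = v} : Finset (Fin m)) then 1 else 0 := by
    ext i
    by_cases h : |y i| = v <;> simp [h]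
  rw [N_eq_of_abs_eq hmul (y := fun i => if |y i| = v then v else 0) fun i => by
    unfold levelPart; split_ifs with h <;> simp [h, abs_of_nonneg hv],
    hlevel, S.smul_eq, N_indicator, abs_of_nonneg hv]
  rfl

lemma sandwichedByLevels_N (hmul : S.IsMultiplicative) : SandwichedByLevels S.onesNorm S.N := by
  intro m y
  have hlevels : ∀ v ∈ levels y, 0 ≤ v := fun v hv => (pos_of_mem_levels hv).le
  refine ⟨fun v hv => ?_, ?_⟩
  · rw [← N_levelPart hmul y (hlevels v hv)]
    exact N_mono hmul fun i => by unfold levelPart; split_ifs <;> simp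
  · calc S.N m y = S.N m (∑ v ∈ levels y, levelPart y v) := by rw [sum_levelPart]
      _ ≤ ∑ v ∈ levels y, S.N m (levelPart y v) :=
          le_sum_of_subadditive (S.N m) (map_zero (S.toSeminorm m)).le S.add_le _ _
      _ = ∑ v ∈ levels y, v * S.onesNorm (levelCount y v) :=
          sum_congr rfl fun v hv => N_levelPart hmul y (hlevels v hv)

end NormSystem

/-- (Aubrun–Nechita) Every multiplicative system of norms is the `ℓ^q`-norm
for some `q ∈ [1,∞]`. -/
theorem multiplicative_normSystem_eq_lqNorm
    (S : NormSystem) (hmul : S.IsMultiplicative) :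
    ∃ q : ℝ≥0∞, 1 ≤ q ∧ ∀ (n : ℕ), 1 ≤ n → ∀ x : Fin n → ℝ, S.N n x = lqNorm q x := by
  obtain ⟨c, hc₀, hc₁, hones⟩ := NormSystem.exists_onesNorm_eq_rpow hmul
  -- `q = 1 / c`, read in `ℝ≥0∞` so that `c = 0` gives `q = ∞`.
  set q := (ENNReal.ofReal c)⁻¹
  have hq : 1 ≤ q := ENNReal.one_le_inv.2 (ENNReal.ofReal_le_one.2 hc₁)
  have hqc : 1 / q.toReal = c := by
    rw [ENNReal.toReal_inv, ENNReal.toReal_ofReal hc₀, one_div, inv_inv]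
  refine ⟨q, hq, fun n _ x => ?_⟩
  refine eq_of_sandwichedByLevels S.N_nonneg (fun _ => lqNorm_nonneg q) hmul
    (isTensorMultiplicative_lqNorm q) ((NormSystem.sandwichedByLevels_N hmul).congr hones) ?_ x
  simpa only [hqc] using sandwichedByLevels_lqNorm hq
end

section
/- For any convex multiplicative system of means M, there exists α ∈ [0,1] such that M((s, 1−s), (1, 0)) = s^α for all s ∈ (0,1). -/
open scoped NNReal ENNReal BigOperators

/-- The power mean `M_p` of order `p ∈ [0,∞]` with weights `w` and arguments `x`. -/
noncomputable def powerMean (p : ℝ≥0∞) {n : ℕ} (w x : Fin n → ℝ≥0) : ℝ≥0 :=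
  if p = ∞ then (Finset.univ.filter (fun i => 0 < w i)).sup x
  else if p = 0 then ∏ i, x i ^ ((w i : ℝ))
  else (∑ i, w i * x i ^ p.toReal) ^ (1 / p.toReal)

/-- A system of means: for each `n`, a function `M n : Δ_n × ℝ≥0ⁿ → ℝ≥0`
(defined on all of `ℝ≥0ⁿ × ℝ≥0ⁿ`, with the axioms demanded only when `∑ w = 1`),
satisfying functoriality, consistency and monotonicity. -/
structure MeanSystem where
  M : ∀ n : ℕ, (Fin n → ℝ≥0) → (Fin n → ℝ≥0) → ℝ≥0
  functorial : ∀ {m n : ℕ} (f : Fin m → Fin n) (w : Fin m → ℝ≥0),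
    (∑ i, w i) = 1 → ∀ x : Fin n → ℝ≥0,
      M n (fun j => ∑ i ∈ Finset.univ.filter (fun i => f i = j), w i) x = M m w (x ∘ f)
  consistent : ∀ c : ℝ≥0, M 1 (fun _ => 1) (fun _ => c) = c
  mono : ∀ {n : ℕ} (w x y : Fin n → ℝ≥0), (∑ i, w i) = 1 →
    (∀ i, x i ≤ y i) → M n w x ≤ M n w y

/-- Multiplicativity of a system of means, with respect to the fixed bijection
`finProdFinEquiv : Fin m × Fin n ≃ Fin (m * n)`. -/
def MeanSystem.IsMultiplicative (S : MeanSystem) : Prop :=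
  ∀ {m n : ℕ} (w x : Fin m → ℝ≥0) (v y : Fin n → ℝ≥0),
    (∑ i, w i) = 1 → (∑ j, v j) = 1 →
    S.M (m * n) (fun k => w (finProdFinEquiv.symm k).1 * v (finProdFinEquiv.symm k).2)
        (fun k => x (finProdFinEquiv.symm k).1 * y (finProdFinEquiv.symm k).2)
      = S.M m w x * S.M n v y

/-- Convexity of a system of means. -/
def MeanSystem.IsConvex (S : MeanSystem) : Prop :=
  ∀ {n : ℕ} (w x y : Fin n → ℝ≥0), (∑ i, w i) = 1 →
    S.M n w (fun i => (x i + y i) / 2) ≤ max (S.M n w x) (S.M n w y)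

/-!
Put `θ(s) = M((s, 1 - s), (1, 0))`. Multiplicativity and functoriality make `θ` multiplicative
on `[0, 1]` (the tensor square of `(1, 0)` is the indicator of one corner, of weight `s t`), and
since `θ ≤ 1` by monotonicity, `θ` is monotone. Convexity, applied to `(1, 0)` and `(0, 1)`,
whose average is constant, gives `θ(1/2) ≥ 1/2`, hence `θ > 0` on `(0, 1)`. After taking
logarithms, `θ` becomes a monotone solution of Cauchy's equation on `(0, ∞)`, so `θ(s) = s^α`,
and `1/2 ≤ θ(1/2) ≤ 1` forces `α ∈ [0, 1]`.
-/

open Set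

theorem eq_mul_of_map_add_of_monotoneOn {g : ℝ → ℝ}
    (hadd : ∀ x > 0, ∀ y > 0, g (x + y) = g x + g y) (hmono : MonotoneOn g (Ioi 0))
    {x : ℝ} (hx : 0 < x) : g x = g 1 * x := by
  have nsmul : ∀ n : ℕ, ∀ y > 0, g ((n + 1) * y) = (n + 1) * g y := by
    intro n y hy
    induction n with
    | zero => simp
    | succ n ih =>
      rw [Nat.cast_succ, add_one_mul, hadd _ (by positivity) _ hy, ih]
      ring
  have nonneg : ∀ y > 0, 0 ≤ g y := fun y hy => by
    have := hmono hy (show y + y ∈ Ioi 0 from add_pos hy hy) (by linarith)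
    rw [hadd y hy y hy] at this
    linarith
  have lower : ∀ (m : ℕ) (y : ℝ), 0 < y → m ≤ y → m * g 1 ≤ g y := by
    rintro (_ | m) y hy hmy
    · simpa using nonneg y hy
    · push_cast at hmy ⊢
      rw [← nsmul m 1 one_pos, mul_one]
      exact hmono (mem_Ioi.mpr (Nat.cast_add_one_pos m)) hy hmy
  have upper : ∀ (m : ℕ) (y : ℝ), 0 < y → y ≤ m + 1 → g y ≤ (m + 1) * g 1 := by
    intro m y hy hym
    rw [← nsmul m 1 one_pos, mul_one]
    exact hmono hy (mem_Ioi.mpr (Nat.cast_add_one_pos m)) hym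
  have bound : ∀ n : ℕ, (n + 1) * |g x - g 1 * x| ≤ g 1 := by
    intro n
    have hnx : 0 < (n + 1) * x := by positivity
    have hfloor := Nat.floor_le hnx.le
    have hceil := (Nat.lt_floor_add_one ((n + 1) * x)).le
    have h1 := lower _ _ hnx hfloor
    have h2 := upper _ _ hnx hceil
    have h3 := mul_le_mul_of_nonneg_right hfloor (nonneg 1 one_pos)
    have h4 := mul_le_mul_of_nonneg_right hceil (nonneg 1 one_pos)
    rw [nsmul n x hx] at h1 h2
    -- both `(n + 1) g(x)` and `(n + 1) x g(1)` lie in `[⌊(n + 1) x⌋ g(1), (⌊(n + 1) x⌋ + 1) g(1)]`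
    rw [← abs_of_pos (Nat.cast_add_one_pos (α := ℝ) n), ← abs_mul, abs_le]
    constructor <;> nlinarith
  by_contra hne
  have hpos : 0 < |g x - g 1 * x| := abs_pos.mpr (sub_ne_zero.mpr hne)
  obtain ⟨n, hn⟩ := exists_nat_gt (g 1 / |g x - g 1 * x|)
  rw [div_lt_iff₀ hpos] at hn
  nlinarith [bound n]

theorem NNReal.exists_eq_rpow_of_map_mul_of_monotoneOn {f : ℝ≥0 → ℝ≥0}
    (hmul : ∀ s ∈ Ioo 0 1, ∀ t ∈ Ioo 0 1, f (s * t) = f s * f t)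
    (hmono : MonotoneOn f (Ioo 0 1)) (hpos : ∀ s ∈ Ioo 0 1, 0 < f s) :
    ∃ α : ℝ, ∀ s ∈ Ioo 0 1, f s = s ^ α := by
  let e : ℝ → ℝ≥0 := fun u => (Real.exp (-u)).toNNReal
  have he : ∀ u > 0, e u ∈ Ioo 0 1 := fun u hu => by
    simp only [e, mem_Ioo, Real.toNNReal_pos, Real.toNNReal_lt_one]
    exact ⟨Real.exp_pos _, Real.exp_lt_one_iff.mpr (neg_lt_zero.mpr hu)⟩
  have he_log : ∀ s : ℝ≥0, 0 < s → e (-Real.log s) = s := fun s hs => by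
    simp only [e, neg_neg, Real.exp_log (NNReal.coe_pos.mpr hs), Real.toNNReal_coe]
  let g : ℝ → ℝ := fun u => -Real.log (f (e u))
  have hg_add : ∀ u > 0, ∀ v > 0, g (u + v) = g u + g v := fun u hu v hv => by
    have : e (u + v) = e u * e v := by
      simp only [e, neg_add, Real.exp_add, Real.toNNReal_mul (Real.exp_pos _).le]
    simp only [g, this, hmul _ (he u hu) _ (he v hv), NNReal.coe_mul,
      Real.log_mul (NNReal.coe_pos.mpr (hpos _ (he u hu))).ne'
        (NNReal.coe_pos.mpr (hpos _ (he v hv))).ne', neg_add]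
  have hg_mono : MonotoneOn g (Ioi 0) := fun u hu v hv huv => by
    have : e v ≤ e u := Real.toNNReal_le_toNNReal (Real.exp_le_exp.mpr (neg_le_neg huv))
    exact neg_le_neg (Real.log_le_log (hpos _ (he v hv)) (hmono (he v hv) (he u hu) this))
  refine ⟨g 1, fun s hs => ?_⟩
  have hu : 0 < -Real.log s := neg_pos.mpr (Real.log_neg hs.1 hs.2)
  have key := eq_mul_of_map_add_of_monotoneOn hg_add hg_mono hu
  simp only [g, he_log s hs.1] at key
  apply NNReal.coe_injective
  rw [NNReal.coe_rpow, Real.rpow_def_of_pos (NNReal.coe_pos.mpr hs.1),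
    ← Real.exp_log (NNReal.coe_pos.mpr (hpos s hs))]
  dsimp only [g]
  congr 1
  linarith

theorem sum_pair_one_sub {s : ℝ≥0} (hs : s ≤ 1) : ∑ i, ![s, 1 - s] i = 1 := by
  simp [Fin.sum_univ_two, add_tsub_cancel_of_le hs]

namespace MeanSystem

variable (S : MeanSystem)

def theta (s : ℝ≥0) : ℝ≥0 := S.M 2 ![s, 1 - s] ![1, 0]

theorem M_const {n : ℕ} {w : Fin n → ℝ≥0} (hw : ∑ i, w i = 1) (c : ℝ≥0) :
    S.M n w (fun _ => c) = c := by
  have h := S.functorial (fun _ => (0 : Fin 1)) w hw (fun _ => c)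
  have hpush : (fun j : Fin 1 => ∑ i ∈ Finset.univ.filter (fun _ => (0 : Fin 1) = j), w i) =
      fun _ => 1 := by
    funext j
    simpa [Subsingleton.elim j 0] using hw
  rw [hpush, S.consistent] at h
  exact h.symm

theorem M_pair_swap {s t : ℝ≥0} (hst : s + t = 1) (a b : ℝ≥0) :
    S.M 2 ![s, t] ![a, b] = S.M 2 ![t, s] ![b, a] := by
  have h := S.functorial ![1, 0] ![t, s] (by simpa [Fin.sum_univ_two, add_comm] using hst) ![a, b]
  have hpush :
      (fun j => ∑ i ∈ Finset.univ.filter (fun i => ![(1 : Fin 2), 0] i = j), ![t, s] i) =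
        ![s, t] := by
    funext j
    fin_cases j <;> simp [Finset.sum_filter, Fin.sum_univ_two]
  have hx : ![a, b] ∘ ![(1 : Fin 2), 0] = ![b, a] := by
    funext k
    fin_cases k <;> rfl
  rwa [hpush, hx] at h

theorem theta_le_one {s : ℝ≥0} (hs : s ≤ 1) : S.theta s ≤ 1 := by
  have h := S.mono ![s, 1 - s] ![1, 0] (fun _ => 1) (sum_pair_one_sub hs)
    (fun i => by fin_cases i <;> simp)
  rwa [S.M_const (sum_pair_one_sub hs)] at h

theorem theta_mul (hmul : S.IsMultiplicative) {s t : ℝ≥0} (hs : s ≤ 1) (ht : t ≤ 1) :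
    S.theta (s * t) = S.theta s * S.theta t := by
  -- `(1, 0) ⊗ (1, 0)` is the indicator of the corner `(0, 0)`, which carries the weight `s * t`
  let corner : Fin (2 * 2) → Fin 2 := fun k => if finProdFinEquiv.symm k = (0, 0) then 0 else 1
  have hW : ∑ k : Fin (2 * 2),
      ![s, 1 - s] (finProdFinEquiv.symm k).1 * ![t, 1 - t] (finProdFinEquiv.symm k).2 = 1 := by
    rw [finProdFinEquiv.symm.sum_comp (fun p => ![s, 1 - s] p.1 * ![t, 1 - t] p.2),
      Fintype.sum_prod_type, ← Finset.sum_mul_sum, sum_pair_one_sub hs, sum_pair_one_sub ht,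
      one_mul]
  have h := S.functorial corner _ hW ![1, 0]
  have hrest : s * (1 - t) + ((1 - s) * t + (1 - s) * (1 - t)) = 1 - s * t := by
    apply NNReal.coe_injective
    push_cast [NNReal.coe_sub hs, NNReal.coe_sub ht, NNReal.coe_sub (mul_le_one' hs ht)]
    ring
  have hpush : (fun j => ∑ k ∈ Finset.univ.filter (fun k => corner k = j),
      ![s, 1 - s] (finProdFinEquiv.symm k).1 * ![t, 1 - t] (finProdFinEquiv.symm k).2) =
      ![s * t, 1 - s * t] := by
    funext j
    rw [Finset.sum_filter, finProdFinEquiv.symm.sum_comp (fun p =>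
      if (if p = (0, 0) then (0 : Fin 2) else 1) = j then ![s, 1 - s] p.1 * ![t, 1 - t] p.2
      else 0), Fintype.sum_prod_type]
    fin_cases j
    · simp
    · simpa [Fin.sum_univ_two] using hrest
  have hx : ![(1 : ℝ≥0), 0] ∘ corner = fun k =>
      ![(1 : ℝ≥0), 0] (finProdFinEquiv.symm k).1 * ![1, 0] (finProdFinEquiv.symm k).2 := by
    funext k
    obtain ⟨⟨a, b⟩, rfl⟩ := finProdFinEquiv.surjective k
    simp only [Function.comp, corner, Equiv.symm_apply_apply]
    fin_cases a <;> fin_cases b <;> simp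
  rw [hpush, hx] at h
  rw [theta, h, hmul _ _ _ _ (sum_pair_one_sub hs) (sum_pair_one_sub ht)]
  rfl

theorem theta_one : S.theta 1 = 1 := by
  have h := S.functorial (fun _ : Fin 1 => (0 : Fin 2)) (fun _ => 1) (by simp) ![1, 0]
  have hpush : (fun j => ∑ i ∈ Finset.univ.filter (fun _ : Fin 1 => (0 : Fin 2) = j), 1) =
      ![(1 : ℝ≥0), 1 - 1] := by
    funext j
    fin_cases j <;> simp
  rw [hpush] at h
  exact h.trans (S.consistent 1)

theorem theta_pow (hmul : S.IsMultiplicative) {s : ℝ≥0} (hs : s ≤ 1) (n : ℕ) :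
    S.theta (s ^ n) = S.theta s ^ n := by
  induction n with
  | zero => simp [theta_one]
  | succ n ih => rw [pow_succ, S.theta_mul hmul (pow_le_one₀ zero_le hs) hs, ih, ← pow_succ]

theorem theta_monotoneOn (hmul : S.IsMultiplicative) : MonotoneOn S.theta (Icc 0 1) := by
  intro s _ t ht hst
  rcases (zero_le : 0 ≤ t).eq_or_lt with rfl | ht0
  · rw [nonpos_iff_eq_zero.mp hst]
  calc S.theta s = S.theta (t * (s / t)) := by rw [mul_div_cancel₀ _ ht0.ne']
    _ = S.theta t * S.theta (s / t) := S.theta_mul hmul ht.2 (div_le_one_of_le₀ hst zero_le)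
    _ ≤ S.theta t :=
      mul_le_of_le_one_right zero_le (S.theta_le_one (div_le_one_of_le₀ hst zero_le))

theorem half_le_theta_half (hconv : S.IsConvex) : 1 / 2 ≤ S.theta (1 / 2) := by
  have hhalf : (1 : ℝ≥0) - 1 / 2 = 1 / 2 := tsub_eq_of_eq_add (add_halves 1).symm
  have h := hconv ![1 / 2, 1 - 1 / 2] ![1, 0] ![0, 1] (sum_pair_one_sub (by norm_num))
  have hmid : (fun i => (![(1 : ℝ≥0), 0] i + ![0, 1] i) / 2) = fun _ => 1 / 2 := by
    funext i
    fin_cases i <;> simp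
  rw [hmid, S.M_const (sum_pair_one_sub (by norm_num)), hhalf,
    S.M_pair_swap (add_halves 1) 0 1, max_self] at h
  rwa [theta, hhalf]

theorem theta_pos (hconv : S.IsConvex) (hmul : S.IsMultiplicative) {s : ℝ≥0} (hs : 0 < s)
    (hs1 : s ≤ 1) : 0 < S.theta s := by
  obtain ⟨n, hn⟩ := NNReal.exists_pow_lt_of_lt_one hs (by norm_num : (1 / 2 : ℝ≥0) < 1)
  calc 0 < (1 / 2 : ℝ≥0) ^ n := by positivity
    _ ≤ S.theta (1 / 2) ^ n := pow_le_pow_left₀ zero_le (S.half_le_theta_half hconv) n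
    _ = S.theta ((1 / 2) ^ n) := (S.theta_pow hmul (by norm_num) n).symm
    _ ≤ S.theta s := S.theta_monotoneOn hmul ⟨zero_le, pow_le_one₀ zero_le (by norm_num)⟩
      ⟨zero_le, hs1⟩ hn.le

end MeanSystem

/-- For any convex multiplicative system of means, there is `α ∈ [0,1]` with
`M((s, 1−s), (1, 0)) = s^α` for all `s ∈ (0,1)`. -/
theorem meanSystem_theta_eq_rpow (S : MeanSystem)
    (hconv : S.IsConvex) (hmul : S.IsMultiplicative) :
    ∃ α : ℝ, 0 ≤ α ∧ α ≤ 1 ∧ ∀ s : ℝ≥0, 0 < s → s < 1 →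
      S.M 2 ![s, 1 - s] ![1, 0] = s ^ α := by
  obtain ⟨α, hα⟩ := NNReal.exists_eq_rpow_of_map_mul_of_monotoneOn
    (fun s hs t ht => S.theta_mul hmul hs.2.le ht.2.le)
    ((S.theta_monotoneOn hmul).mono Ioo_subset_Icc_self)
    (fun s hs => S.theta_pos hconv hmul hs.1 hs.2.le)
  have h0 : (0 : ℝ≥0) < 1 / 2 := by norm_num
  have h1 : (1 / 2 : ℝ≥0) < 1 := by norm_num
  have hhalf : S.theta (1 / 2) = (1 / 2) ^ α := hα _ ⟨h0, h1⟩
  refine ⟨α, le_of_not_gt fun hα0 => ?_, le_of_not_gt fun hα1 => ?_,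
    fun s hs0 hs1 => hα s ⟨hs0, hs1⟩⟩
  · have := NNReal.rpow_lt_rpow_of_exponent_gt h0 h1 hα0
    rw [NNReal.rpow_zero, ← hhalf] at this
    exact (S.theta_le_one h1.le).not_gt this
  · have := NNReal.rpow_lt_rpow_of_exponent_gt h0 h1 hα1
    rw [NNReal.rpow_one, ← hhalf] at this
    exact (S.half_le_theta_half hconv).not_gt this
end
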